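/- Fix dt ∈ ℝ, ω, a, g ∈ ℝ³. Let Γ be the matrix of SE_2(3) block form with blocks (I₃, dt·g, 0), let Υ be the matrix of SE_2(3) block form with blocks (exp(dt·ω_×), dt·a, 0) where ω_× is the skew-symmetric cross-product matrix of ω and exp is the matrix exponential, and let Φ_dt(T) = F⁻¹ T F where F is the 5×5 identity matrix except entry (4,5) equal to dt. Then for every T of SE_2(3) block form with blocks (R, v, x), the matrix Γ · Φ_dt(T) · Υ has SE_2(3) block form with blocks (R · exp(dt·ω_×), v + dt·(R a + g), x + dt·v). That is, the discrete-time noise-free inertial navigation dynamics R ← R exp(dt·ω_×), v ← v + dt(Ra + g), x ← x + dt·v are group affine on SE_2(3). -/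

import Mathlib

open Matrix NormedSpace

/-- The 3×2 matrix whose two columns are `v` and `x`. -/
def colVX (v x : Fin 3 → ℝ) : Matrix (Fin 3) (Fin 2) ℝ :=
  Matrix.of fun i j => ![v i, x i] j

/-- The 5×5 extended pose `[R, v, x; 0₂ₓ₃, I₂]` (block indices `Fin 3 ⊕ Fin 2`). -/
def SE23mk (R : Matrix (Fin 3) (Fin 3) ℝ) (v x : Fin 3 → ℝ) :
    Matrix (Fin 3 ⊕ Fin 2) (Fin 3 ⊕ Fin 2) ℝ :=
  Matrix.fromBlocks R (colVX v x) 0 1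

/-- `R` is a rotation matrix: `Rᵀ R = I₃` and `det R = 1`. -/
def IsRot (R : Matrix (Fin 3) (Fin 3) ℝ) : Prop := Rᵀ * R = 1 ∧ R.det = 1

/-- The skew-symmetric cross-product matrix `ω_×` of `ω ∈ ℝ³`. -/
def skew (ω : Fin 3 → ℝ) : Matrix (Fin 3) (Fin 3) ℝ :=
  !![0, -ω 2, ω 1; ω 2, 0, -ω 0; -ω 1, ω 0, 0]

/-- The 5×5 identity matrix except that its (4,5) entry equals `dt`. -/
def Fdt (dt : ℝ) : Matrix (Fin 3 ⊕ Fin 2) (Fin 3 ⊕ Fin 2) ℝ :=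
  Matrix.fromBlocks 1 0 0 !![1, dt; 0, 1]

/-- The conjugation map `Φ_dt(A) = F⁻¹ A F`. -/
noncomputable def Phidt (dt : ℝ) (A : Matrix (Fin 3 ⊕ Fin 2) (Fin 3 ⊕ Fin 2) ℝ) :
    Matrix (Fin 3 ⊕ Fin 2) (Fin 3 ⊕ Fin 2) ℝ :=
  (Fdt dt)⁻¹ * A * Fdt dt


lemma mul_colVX (M : Matrix (Fin 3) (Fin 3) ℝ) (v x : Fin 3 → ℝ) :
    M * colVX v x = colVX (M *ᵥ v) (M *ᵥ x) := by
  ext i j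
  fin_cases j <;>
    simp [colVX, Matrix.mul_apply, Matrix.mulVec, dotProduct, Fin.sum_univ_succ]

lemma SE23_mul (R1 R2 : Matrix (Fin 3) (Fin 3) ℝ) (v1 x1 v2 x2 : Fin 3 → ℝ) :
    SE23mk R1 v1 x1 * SE23mk R2 v2 x2 =
      SE23mk (R1 * R2) (R1 *ᵥ v2 + v1) (R1 *ᵥ x2 + x1) := by
  unfold SE23mk
  rw [Matrix.fromBlocks_multiply, mul_colVX]
  have h1 : colVX (R1 *ᵥ v2) (R1 *ᵥ x2) + colVX v1 x1
      = colVX (R1 *ᵥ v2 + v1) (R1 *ᵥ x2 + x1) := by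
    ext i j; fin_cases j <;> simp [colVX]
  simp [h1]

lemma Fdt_inv (dt : ℝ) : (Fdt dt)⁻¹ = Fdt (-dt) := by
  apply Matrix.inv_eq_right_inv
  unfold Fdt
  rw [Matrix.fromBlocks_multiply]
  have : (!![1, dt; 0, 1] * !![1, -dt; 0, 1] : Matrix (Fin 2) (Fin 2) ℝ) = 1 := by
    norm_num [Matrix.mul_fin_two]; exact Matrix.one_fin_two.symm
  simp [this, ← Matrix.fromBlocks_one]

lemma colVX_mul (v x : Fin 3 → ℝ) (dt : ℝ) :
    colVX v x * !![1, dt; 0, 1] = colVX v (x + dt • v) := by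
  ext i j
  fin_cases j <;> simp [colVX, Matrix.mul_apply, Fin.sum_univ_succ] <;> ring

lemma Phidt_SE23 (dt : ℝ) (R : Matrix (Fin 3) (Fin 3) ℝ) (v x : Fin 3 → ℝ) :
    (Fdt dt)⁻¹ * SE23mk R v x * Fdt dt = SE23mk R v (x + dt • v) := by
  rw [Fdt_inv]
  unfold Fdt SE23mk
  rw [Matrix.fromBlocks_multiply, Matrix.fromBlocks_multiply]
  have hD : (!![1, -dt; 0, 1] * !![1, dt; 0, 1] : Matrix (Fin 2) (Fin 2) ℝ) = 1 := by
    norm_num [Matrix.mul_fin_two]; exact Matrix.one_fin_two.symm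
  simp [hD, colVX_mul]

/-- **Unbiased inertial navigation is group affine on `SE₂(3)`.** With
`Γ = [I₃, dt·g, 0; 0, I₂]`, `Υ = [exp(dt·ω_×), dt·a, 0; 0, I₂]` and the automorphism
`Φ_dt`, one has, for every extended pose with blocks `(R, v, x)`,
`Γ · Φ_dt(T) · Υ = [R·exp(dt·ω_×), v + dt·(R a + g), x + dt·v; 0, I₂]`. -/
theorem inertial_navigation_group_affine
    (dt : ℝ) (ω a g : Fin 3 → ℝ)
    (Γ Υ : Matrix (Fin 3 ⊕ Fin 2) (Fin 3 ⊕ Fin 2) ℝ)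
    (hΓ : Γ = SE23mk 1 (dt • g) 0)
    (hΥ : Υ = SE23mk (exp (dt • skew ω)) (dt • a) 0)
    (R : Matrix (Fin 3) (Fin 3) ℝ) (v x : Fin 3 → ℝ) (hR : IsRot R) :
    Γ * Phidt dt (SE23mk R v x) * Υ =
      SE23mk (R * exp (dt • skew ω)) (v + dt • (R *ᵥ a + g)) (x + dt • v) := by
  rw [hΓ, hΥ]
  unfold Phidt
  rw [Phidt_SE23, SE23_mul, SE23_mul]
  simp only [Matrix.one_mul, Matrix.one_mulVec, Matrix.mulVec_zero, add_zero, zero_add,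
    Matrix.mulVec_smul]
  congr 1
  funext i
  simp [smul_add]
  ring
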